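/- Let (ω_j)_{j∈E₊} be complex numbers with only finitely many nonzero, and set Ω = Σ_{j∈E₊} (ω_j/j)·Λ_{−j} ∈ 𝔤. Then for every k ∈ ℤ: (i) (ad_Ω)³(B_k) = 0, so e^{ad_Ω}(B_k) := B_k + [Ω, B_k] + (1/2)·[Ω, [Ω, B_k]] is a well-defined element of 𝔤; (ii) e^{ad_Ω}(B_k) = d_k − (1/N)·Σ_{i∈E₊} ( ω_i·Λ_{Nk−i} + i·t_i·Λ_{Nk+i} ) + ( (1/(2N))·Σ_{i,j∈E₊, i+j=Nk} ω_i·ω_j + (1/N)·Σ_{i∈E₊, i+Nk∈E₊} i·t_i·ω_{i+Nk} + (1/(2N))·Σ_{i,j∈E₊, i+j=−Nk} i·j·t_i·t_j )·c. -/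

import Mathlib

/-!
Bracketing with `Ω = Σ (ω_j/j) Λ_{-j}` turns `d_k` into `-(1/N) Σ ω_j Λ_{Nk-j}` and each `Λ_m`
into the central multiple `-ω_m c` (zero unless `m ∈ E₊`). Hence `[Ω, B_k]` is a combination of
`Λ`'s plus a multiple of `c`, `[Ω, [Ω, B_k]]` is a multiple of `c`, and the third bracket
vanishes. Since `[Λ_{-j}, Λ_m]` only sees `j = m`, the double sums collapse to the restricted
sums of the formula.
-/

noncomputable section

/-- The element `B_k`. -/
noncomputable def Bel (N : ℕ) (E : Set ℤ) {L : Type*} [LieRing L] [LieAlgebra ℂ L]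
    (c : L) (Lam : ℤ → L) (d : ℤ → L) (t : ℤ → ℂ) (k : ℤ) : L :=
  d k - (N : ℂ)⁻¹ • (∑ᶠ i ∈ {i : ℤ | i ∈ E ∧ 0 < i}, ((i : ℂ) * t i) • Lam (i + (N : ℤ) * k))
    + ((2 * (N : ℂ))⁻¹ *
        ∑ᶠ p ∈ {p : ℤ × ℤ | (p.1 ∈ E ∧ 0 < p.1) ∧ (p.2 ∈ E ∧ 0 < p.2)
            ∧ p.1 + p.2 = -((N : ℤ) * k)},
          (p.1 : ℂ) * (p.2 : ℂ) * t p.1 * t p.2) • c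

/-- The element `Ω = Σ_{j∈E₊} (ω_j/j)·Λ_{-j}`. -/
noncomputable def OmEl (E : Set ℤ) {L : Type*} [LieRing L] [LieAlgebra ℂ L]
    (Lam : ℤ → L) (w : ℤ → ℂ) : L :=
  ∑ᶠ j ∈ {j : ℤ | j ∈ E ∧ 0 < j}, (w j / (j : ℂ)) • Lam (-j)

open Function

section LieRing

variable {ι L : Type*} [LieRing L]

theorem lie_finsum_mem {s : Set ι} {f : ι → L} (hf : (s ∩ support f).Finite) (x : L) :
    ⁅x, ∑ᶠ i ∈ s, f i⁆ = ∑ᶠ i ∈ s, ⁅x, f i⁆ :=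
  (AddMonoidHom.mk' (fun y => ⁅x, y⁆) (lie_add x)).map_finsum_mem' hf

theorem finsum_mem_lie {s : Set ι} {f : ι → L} (hf : (s ∩ support f).Finite) (y : L) :
    ⁅∑ᶠ i ∈ s, f i, y⁆ = ∑ᶠ i ∈ s, ⁅f i, y⁆ :=
  (AddMonoidHom.mk' (fun x => ⁅x, y⁆) (fun a b => add_lie a b y)).map_finsum_mem' hf

theorem lie_smul_eq_zero_of_central {R : Type*} [CommRing R] [LieAlgebra R L] {c : L}
    (hc : ∀ x : L, ⁅c, x⁆ = 0) (x : L) (r : R) : ⁅x, r • c⁆ = 0 := by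
  rw [lie_smul, ← lie_skew, hc, neg_zero, smul_zero]

end LieRing

theorem Set.Finite.inter_support_smul {ι R M : Type*} [Zero R] [Zero M] [SMulWithZero R M]
    {a : ι → R} (ha : (support a).Finite) (s : Set ι) (v : ι → M) :
    (s ∩ support fun i => a i • v i).Finite :=
  (ha.subset (support_smul_subset_left a v)).inter_of_right s

theorem add_mul_mem_of_neg_mem_of_add_mem {E : Set ℤ} {a : ℤ} (hneg : ∀ j, j ∈ E ↔ -j ∈ E)
    (hadd : ∀ j ∈ E, j + a ∈ E) {j : ℤ} (hj : j ∈ E) (m : ℤ) : j + a * m ∈ E := by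
  induction m using Int.induction_on with
  | zero => simpa using hj
  | succ m ih => simpa [mul_add, add_assoc] using hadd _ ih
  | pred m ih =>
    rw [hneg, show -(j + a * (-(m : ℤ) - 1)) = -(j + a * -(m : ℤ)) + a by ring]
    exact hadd _ ((hneg _).1 ih)

theorem finsum_mem_mul_indicator_comp {ι κ R : Type*} [NonUnitalNonAssocSemiring R] (s : Set ι)
    (t : Set κ) (g : ι → κ) (a : ι → R) (f : κ → R) :
    ∑ᶠ i ∈ s, a i * t.indicator f (g i) = ∑ᶠ i ∈ s ∩ g ⁻¹' t, a i * f (g i) := by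
  have : (fun i => a i * t.indicator f (g i)) = (g ⁻¹' t).indicator fun i => a i * f (g i) := by
    ext i
    by_cases hi : g i ∈ t <;> simp [hi]
  rw [finsum_mem_def, this, Set.indicator_indicator, ← finsum_mem_def]

theorem finsum_mem_eq_finsum_mem_antidiagonal {α M : Type*} [AddCommGroup α] [AddCommMonoid M]
    (s : Set α) (n : α) (f : α → α → M) :
    ∑ᶠ i ∈ s ∩ (n - ·) ⁻¹' s, f i (n - i)
      = ∑ᶠ p ∈ {p : α × α | p.1 ∈ s ∧ p.2 ∈ s ∧ p.1 + p.2 = n}, f p.1 p.2 := by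
  refine finsum_mem_eq_of_bijOn (fun i => (i, n - i)) ⟨?_, ?_, ?_⟩ fun _ _ => rfl
  · rintro i ⟨hi, hni⟩
    exact ⟨hi, hni, add_sub_cancel i n⟩
  · exact fun i _ j _ h => congrArg Prod.fst h
  · rintro ⟨i, j⟩ ⟨hi, hj, rfl⟩
    exact ⟨i, ⟨hi, by simpa using hj⟩, by simp⟩

section Heisenberg

variable {L : Type*} [LieRing L] [LieAlgebra ℂ L] {E : Set ℤ} {Lam : ℤ → L} {w : ℤ → ℂ}

theorem finite_inter_support_OmEl_summand (hw : (support w).Finite) (s : Set ℤ) :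
    (s ∩ support fun j => (w j / (j : ℂ)) • Lam (-j)).Finite :=
  (hw.subset fun _ hj => (div_ne_zero_iff.1 hj).1).inter_support_smul s _

theorem OmEl_lie_d {N : ℕ} {d : ℤ → L} {k : ℤ} (hEneg : ∀ j : ℤ, j ∈ E ↔ -j ∈ E)
    (hdLam : ∀ j ∈ E, ⁅d k, Lam j⁆ = (-(j : ℂ) / (N : ℂ)) • Lam (j + (N : ℤ) * k))
    (hw : (support w).Finite) :
    ⁅OmEl E Lam w, d k⁆ = -((N : ℂ)⁻¹ • ∑ᶠ j ∈ {j | j ∈ E ∧ 0 < j}, w j • Lam (N * k - j)) := by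
  rw [OmEl, finsum_mem_lie (finite_inter_support_OmEl_summand hw _)]
  simp only [smul_finsum, ← finsum_neg_distrib]
  refine finsum_mem_congr rfl fun j ⟨hjE, hj⟩ => ?_
  rw [smul_lie, ← lie_skew, hdLam _ ((hEneg j).1 hjE), neg_add_eq_sub, smul_neg, smul_smul,
    smul_smul]
  congr 2
  have : (j : ℂ) ≠ 0 := by exact_mod_cast hj.ne'
  push_cast
  field_simp

theorem OmEl_lie_Lam {c : L} (hEneg : ∀ j : ℤ, j ∈ E ↔ -j ∈ E)
    (hLam : ∀ i ∈ E, ∀ j ∈ E, ⁅Lam i, Lam j⁆ = (if i + j = 0 then (i : ℂ) else 0) • c)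
    (hw : (support w).Finite) {m : ℤ} (hm : m ∈ E) :
    ⁅OmEl E Lam w, Lam m⁆ = -({j | j ∈ E ∧ 0 < j}.indicator w m) • c := by
  rw [OmEl, finsum_mem_lie (finite_inter_support_OmEl_summand hw _), finsum_mem_def,
    finsum_eq_single _ m]
  · by_cases hm' : m ∈ {j | j ∈ E ∧ 0 < j}
    · have : (m : ℂ) ≠ 0 := by exact_mod_cast hm'.2.ne'
      rw [Set.indicator_of_mem hm', Set.indicator_of_mem hm', smul_lie,
        hLam _ ((hEneg m).1 hm) _ hm, if_pos (neg_add_cancel m), smul_smul]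
      congr 1
      push_cast
      field_simp
    · simp [Set.indicator_of_notMem hm']
  · intro j hjm
    by_cases hj : j ∈ {j | j ∈ E ∧ 0 < j}
    · rw [Set.indicator_of_mem hj, smul_lie, hLam _ ((hEneg j).1 hj.1) _ hm,
        if_neg (by omega), zero_smul, smul_zero]
    · exact Set.indicator_of_notMem hj _

theorem OmEl_lie_finsum_smul_Lam {ι : Type*} {c : L} (hEneg : ∀ j : ℤ, j ∈ E ↔ -j ∈ E)
    (hLam : ∀ i ∈ E, ∀ j ∈ E, ⁅Lam i, Lam j⁆ = (if i + j = 0 then (i : ℂ) else 0) • c)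
    (hw : (support w).Finite) {s : Set ι} {a : ι → ℂ} (ha : (support a).Finite) {g : ι → ℤ}
    (hg : ∀ i ∈ s, g i ∈ E) :
    ⁅OmEl E Lam w, ∑ᶠ i ∈ s, a i • Lam (g i)⁆
      = -(∑ᶠ i ∈ s, a i * {j | j ∈ E ∧ 0 < j}.indicator w (g i)) • c := by
  rw [lie_finsum_mem (ha.inter_support_smul _ _), neg_smul]
  simp only [finsum_smul, ← finsum_neg_distrib]
  refine finsum_mem_congr rfl fun i hi => ?_
  rw [lie_smul, OmEl_lie_Lam hEneg hLam hw (hg i hi), smul_smul, mul_neg, neg_smul]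

end Heisenberg

section Virasoro

variable {N : ℕ} {E : Set ℤ} {L : Type*} [LieRing L] [LieAlgebra ℂ L] {c : L} {Lam d : ℤ → L}
  {t w : ℤ → ℂ}

theorem OmEl_lie_Bel (hEneg : ∀ j : ℤ, j ∈ E ↔ -j ∈ E) (hEadd : ∀ j ∈ E, j + (N : ℤ) ∈ E)
    (hc : ∀ x : L, ⁅c, x⁆ = 0)
    (hLam : ∀ i ∈ E, ∀ j ∈ E, ⁅Lam i, Lam j⁆ = (if i + j = 0 then (i : ℂ) else 0) • c)
    (hdLam : ∀ (k : ℤ), ∀ j ∈ E, ⁅d k, Lam j⁆ = (-(j : ℂ) / (N : ℂ)) • Lam (j + (N : ℤ) * k))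
    (ht : (support t).Finite) (hw : (support w).Finite) (k : ℤ) :
    ⁅OmEl E Lam w, Bel N E c Lam d t k⁆
      = -((N : ℂ)⁻¹ • ∑ᶠ j ∈ {j | j ∈ E ∧ 0 < j}, w j • Lam (N * k - j))
        + ((N : ℂ)⁻¹ * ∑ᶠ i ∈ {i : ℤ | (i ∈ E ∧ 0 < i) ∧ (i + N * k ∈ E ∧ 0 < i + N * k)},
            (i : ℂ) * t i * w (i + N * k)) • c := by
  have hti : (support fun i : ℤ => (i : ℂ) * t i).Finite :=
    ht.subset (support_mul_subset_right _ _)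
  rw [Bel, lie_add, lie_sub, lie_smul, OmEl_lie_d hEneg (hdLam k) hw,
    OmEl_lie_finsum_smul_Lam hEneg hLam hw hti
      fun i hi => add_mul_mem_of_neg_mem_of_add_mem hEneg hEadd hi.1 k,
    lie_smul_eq_zero_of_central hc, finsum_mem_mul_indicator_comp]
  simp only [Set.inter_def, Set.mem_preimage, Set.mem_ofPred_eq]
  module

theorem OmEl_lie_OmEl_lie_Bel (hEneg : ∀ j : ℤ, j ∈ E ↔ -j ∈ E)
    (hEadd : ∀ j ∈ E, j + (N : ℤ) ∈ E) (hc : ∀ x : L, ⁅c, x⁆ = 0)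
    (hLam : ∀ i ∈ E, ∀ j ∈ E, ⁅Lam i, Lam j⁆ = (if i + j = 0 then (i : ℂ) else 0) • c)
    (hdLam : ∀ (k : ℤ), ∀ j ∈ E, ⁅d k, Lam j⁆ = (-(j : ℂ) / (N : ℂ)) • Lam (j + (N : ℤ) * k))
    (ht : (support t).Finite) (hw : (support w).Finite) (k : ℤ) :
    ⁅OmEl E Lam w, ⁅OmEl E Lam w, Bel N E c Lam d t k⁆⁆
      = ((N : ℂ)⁻¹ * ∑ᶠ p ∈ {p : ℤ × ℤ | (p.1 ∈ E ∧ 0 < p.1) ∧ (p.2 ∈ E ∧ 0 < p.2)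
            ∧ p.1 + p.2 = N * k}, w p.1 * w p.2) • c := by
  have hmem : ∀ j ∈ {j | j ∈ E ∧ 0 < j}, N * k - j ∈ E := fun j hj => by
    simpa [neg_add_eq_sub] using
      add_mul_mem_of_neg_mem_of_add_mem hEneg hEadd ((hEneg j).1 hj.1) k
  rw [OmEl_lie_Bel hEneg hEadd hc hLam hdLam ht hw, lie_add, lie_neg, lie_smul,
    OmEl_lie_finsum_smul_Lam hEneg hLam hw hw hmem, lie_smul_eq_zero_of_central hc,
    finsum_mem_mul_indicator_comp,
    finsum_mem_eq_finsum_mem_antidiagonal _ _ fun a b => w a * w b]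
  simp only [Set.mem_ofPred_eq]
  module

end Virasoro

theorem expAd_Omega_Bel_general
    (N : ℕ) (E : Set ℤ)
    (hEneg : ∀ j : ℤ, j ∈ E ↔ -j ∈ E)
    (hEadd : ∀ j ∈ E, j + (N : ℤ) ∈ E)
    {L : Type*} [LieRing L] [LieAlgebra ℂ L]
    (c : L) (hc : ∀ x : L, ⁅c, x⁆ = 0)
    (Lam : ℤ → L) (d : ℤ → L)
    (hLam : ∀ i ∈ E, ∀ j ∈ E, ⁅Lam i, Lam j⁆ = (if i + j = 0 then (i : ℂ) else 0) • c)
    (hdLam : ∀ (k : ℤ), ∀ j ∈ E, ⁅d k, Lam j⁆ = (-(j : ℂ) / (N : ℂ)) • Lam (j + (N : ℤ) * k))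
    (t : ℤ → ℂ) (ht : (Function.support t).Finite)
    (w : ℤ → ℂ) (hw : (Function.support w).Finite)
    (k : ℤ) :
    ⁅OmEl E Lam w, ⁅OmEl E Lam w, ⁅OmEl E Lam w, Bel N E c Lam d t k⁆⁆⁆ = 0 ∧
    Bel N E c Lam d t k + ⁅OmEl E Lam w, Bel N E c Lam d t k⁆
        + (2 : ℂ)⁻¹ • ⁅OmEl E Lam w, ⁅OmEl E Lam w, Bel N E c Lam d t k⁆⁆
      = d k
        - (N : ℂ)⁻¹ • (∑ᶠ i ∈ {i : ℤ | i ∈ E ∧ 0 < i},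
            (w i • Lam ((N : ℤ) * k - i) + ((i : ℂ) * t i) • Lam ((N : ℤ) * k + i)))
        + ((2 * (N : ℂ))⁻¹ *
              (∑ᶠ p ∈ {p : ℤ × ℤ | (p.1 ∈ E ∧ 0 < p.1) ∧ (p.2 ∈ E ∧ 0 < p.2)
                  ∧ p.1 + p.2 = (N : ℤ) * k}, w p.1 * w p.2)
            + (N : ℂ)⁻¹ *
              (∑ᶠ i ∈ {i : ℤ | (i ∈ E ∧ 0 < i)
                  ∧ (i + (N : ℤ) * k ∈ E ∧ 0 < i + (N : ℤ) * k)},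
                (i : ℂ) * t i * w (i + (N : ℤ) * k))
            + (2 * (N : ℂ))⁻¹ *
              (∑ᶠ p ∈ {p : ℤ × ℤ | (p.1 ∈ E ∧ 0 < p.1) ∧ (p.2 ∈ E ∧ 0 < p.2)
                  ∧ p.1 + p.2 = -((N : ℤ) * k)},
                (p.1 : ℂ) * (p.2 : ℂ) * t p.1 * t p.2)) • c := by
  have hB2 := OmEl_lie_OmEl_lie_Bel hEneg hEadd hc hLam hdLam ht hw k
  refine ⟨by rw [hB2, lie_smul_eq_zero_of_central hc], ?_⟩
  have hsum : ∑ᶠ i ∈ {i : ℤ | i ∈ E ∧ 0 < i},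
      (w i • Lam ((N : ℤ) * k - i) + ((i : ℂ) * t i) • Lam ((N : ℤ) * k + i))
        = ∑ᶠ i ∈ {i : ℤ | i ∈ E ∧ 0 < i}, w i • Lam ((N : ℤ) * k - i)
          + ∑ᶠ i ∈ {i : ℤ | i ∈ E ∧ 0 < i}, ((i : ℂ) * t i) • Lam (i + (N : ℤ) * k) := by
    rw [finsum_mem_add_distrib' (hw.inter_support_smul _ _)
      ((ht.subset (support_mul_subset_right _ _)).inter_support_smul _ _)]
    simp_rw [add_comm ((N : ℤ) * k)]
  rw [hB2, OmEl_lie_Bel hEneg hEadd hc hLam hdLam ht hw, Bel, hsum, mul_inv]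
  module

/-- With `Ω = Σ_{j∈E₊} (ω_j/j)·Λ_{-j}`, for every `k ∈ ℤ`:
(i) `(ad_Ω)³(B_k) = 0`, so `e^{ad_Ω}(B_k) = B_k + [Ω,B_k] + (1/2)[Ω,[Ω,B_k]]` is
well defined; and (ii)
`e^{ad_Ω}(B_k) = d_k - (1/N)·Σ_{i∈E₊}(ω_i·Λ_{Nk-i} + i·t_i·Λ_{Nk+i})
  + ((1/(2N))·Σ_{i,j∈E₊, i+j=Nk} ω_i·ω_j + (1/N)·Σ_{i∈E₊, i+Nk∈E₊} i·t_i·ω_{i+Nk}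
     + (1/(2N))·Σ_{i,j∈E₊, i+j=-Nk} i·j·t_i·t_j)·c`. -/
theorem expAd_Omega_Bel
    (N : ℕ) (hN : 0 < N) (E : Set ℤ)
    (hEneg : ∀ j : ℤ, j ∈ E ↔ -j ∈ E)
    (hEdvd : ∀ j ∈ E, ¬ ((N : ℤ) ∣ j))
    (hEadd : ∀ j ∈ E, j + (N : ℤ) ∈ E)
    {L : Type*} [LieRing L] [LieAlgebra ℂ L]
    (c : L) (hc : ∀ x : L, ⁅c, x⁆ = 0)
    (Lam : ℤ → L) (d : ℤ → L)
    (hLam : ∀ i ∈ E, ∀ j ∈ E, ⁅Lam i, Lam j⁆ = (if i + j = 0 then (i : ℂ) else 0) • c)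
    (hdLam : ∀ (k : ℤ), ∀ j ∈ E, ⁅d k, Lam j⁆ = (-(j : ℂ) / (N : ℂ)) • Lam (j + (N : ℤ) * k))
    (hdd : ∀ k l : ℤ, ⁅d k, d l⁆ = ((k - l : ℤ) : ℂ) • d (k + l))
    (t : ℤ → ℂ) (ht : (Function.support t).Finite)
    (w : ℤ → ℂ) (hw : (Function.support w).Finite)
    (k : ℤ) :
    ⁅OmEl E Lam w, ⁅OmEl E Lam w, ⁅OmEl E Lam w, Bel N E c Lam d t k⁆⁆⁆ = 0 ∧
    Bel N E c Lam d t k + ⁅OmEl E Lam w, Bel N E c Lam d t k⁆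
        + (2 : ℂ)⁻¹ • ⁅OmEl E Lam w, ⁅OmEl E Lam w, Bel N E c Lam d t k⁆⁆
      = d k
        - (N : ℂ)⁻¹ • (∑ᶠ i ∈ {i : ℤ | i ∈ E ∧ 0 < i},
            (w i • Lam ((N : ℤ) * k - i) + ((i : ℂ) * t i) • Lam ((N : ℤ) * k + i)))
        + ((2 * (N : ℂ))⁻¹ *
              (∑ᶠ p ∈ {p : ℤ × ℤ | (p.1 ∈ E ∧ 0 < p.1) ∧ (p.2 ∈ E ∧ 0 < p.2)
                  ∧ p.1 + p.2 = (N : ℤ) * k}, w p.1 * w p.2)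
            + (N : ℂ)⁻¹ *
              (∑ᶠ i ∈ {i : ℤ | (i ∈ E ∧ 0 < i)
                  ∧ (i + (N : ℤ) * k ∈ E ∧ 0 < i + (N : ℤ) * k)},
                (i : ℂ) * t i * w (i + (N : ℤ) * k))
            + (2 * (N : ℂ))⁻¹ *
              (∑ᶠ p ∈ {p : ℤ × ℤ | (p.1 ∈ E ∧ 0 < p.1) ∧ (p.2 ∈ E ∧ 0 < p.2)
                  ∧ p.1 + p.2 = -((N : ℤ) * k)},
                (p.1 : ℂ) * (p.2 : ℂ) * t p.1 * t p.2)) • c :=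
  expAd_Omega_Bel_general N E hEneg hEadd c hc Lam d hLam hdLam t ht w hw k
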